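/- Let u_n = 3^{n-1}·C_n with C_n = (1/n)·binomial(2n-2, n-1), and define u_n^{#3} = Σ_{i=1}^{n-1} u_i u_{n-i}. Then u_n^{#3} ~ (1/9)·(3·12^{n-1})/√(π n³) as n → ∞. -/

import Mathlib

/-!
Since `C (m + 1)` is the Catalan number `catalan m`, the Catalan recursion collapses the
convolution: `u_n^{#3} = 3^(n-2) * C n`, and the powers of `3` cancel against those of `12`.
What remains is the classical asymptotic `catalan m ~ 4^m / √(π m³)`, which comes from
Stirling's formula through `centralBinom m = (2m)! / (m!)²`.
-/

open Real Filter

/-- `C n = (1/n) * binom(2n-2, n-1)`, the number of bracketings of `n` terms. -/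
noncomputable def catC (n : ℕ) : ℝ := (Nat.choose (2 * n - 2) (n - 1) : ℝ) / n

open Topology Stirling Finset

theorem cast_catalan_eq_centralBinom_div {K : Type*} [Field K] [CharZero K] (m : ℕ) :
    (catalan m : K) = m.centralBinom / (m + 1) := by
  rw [eq_div_iff (Nat.cast_add_one_ne_zero m), mul_comm]
  exact_mod_cast succ_mul_catalan_eq_centralBinom m

theorem catC_succ (m : ℕ) : catC (m + 1) = catalan m := by
  simp [catC, cast_catalan_eq_centralBinom_div, Nat.centralBinom_eq_two_mul_choose, Nat.mul_succ]

theorem sum_Icc_catC_mul_catC (m : ℕ) :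
    ∑ i ∈ Icc 1 (m + 1), catC i * catC (m + 2 - i) = catC (m + 2) := by
  rw [catC_succ, catalan_succ', Nat.cast_sum, Nat.sum_antidiagonal_eq_sum_range_succ_mk,
    ← Ico_add_one_right_eq_Icc, sum_Ico_eq_sum_range]
  refine sum_congr rfl fun k hk => ?_
  rw [add_comm 1 k, catC_succ, show m + 2 - (k + 1) = m - k + 1 by grind, catC_succ, Nat.cast_mul]

theorem sum_Icc_three_pow_mul_catC (m : ℕ) :
    ∑ i ∈ Icc 1 (m + 1),
        ((3 : ℝ) ^ (i - 1) * catC i) * ((3 : ℝ) ^ (m + 2 - i - 1) * catC (m + 2 - i))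
      = 3 ^ m * catC (m + 2) := by
  rw [← sum_Icc_catC_mul_catC, mul_sum]
  refine sum_congr rfl fun i hi => ?_
  rw [mul_mul_mul_comm, ← pow_add, show i - 1 + (m + 2 - i - 1) = m by grind]

theorem centralBinom_mul_sqrt_div_four_pow_eq {m : ℕ} (hm : m ≠ 0) :
    m.centralBinom * √(π * m) / 4 ^ m = stirlingSeq (2 * m) / stirlingSeq m ^ 2 * √π := by
  have hsqrt : √(2 * (2 * m : ℕ) : ℝ) = 2 * √(m : ℝ) := by
    push_cast
    rw [show (2 : ℝ) * (2 * m) = 2 ^ 2 * m by ring, sqrt_mul (by positivity), sqrt_sq zero_le_two]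
  rw [Nat.centralBinom_eq_two_mul_choose, Nat.cast_choose ℝ (by omega), stirlingSeq, stirlingSeq,
    hsqrt, show 2 * m - m = m by omega, sqrt_mul pi_nonneg]
  simp [field, ← exp_nsmul, pow_mul, mul_pow, div_pow]
  ring_nf

theorem tendsto_centralBinom_mul_sqrt_div_four_pow :
    Tendsto (fun m : ℕ => m.centralBinom * √(π * m) / 4 ^ m) atTop (𝓝 1) := by
  have hπ : √π ≠ 0 := by positivity
  have h := ((tendsto_stirlingSeq_sqrt_pi.comp (tendsto_id.const_mul_atTop' two_pos)).div
    (tendsto_stirlingSeq_sqrt_pi.pow 2) (pow_ne_zero 2 hπ)).mul_const √π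
  rw [sq, div_mul_eq_div_div, div_self hπ, one_div_mul_cancel hπ] at h
  refine h.congr' ?_
  filter_upwards [eventually_ne_atTop 0] with m hm
  exact (centralBinom_mul_sqrt_div_four_pow_eq hm).symm

theorem tendsto_catC_mul_sqrt_div_four_pow :
    Tendsto (fun n : ℕ => catC n * √(π * n ^ 3) / 4 ^ (n - 1)) atTop (𝓝 1) := by
  rw [← tendsto_add_atTop_iff_nat 1]
  have hratio : Tendsto (fun m : ℕ => √(1 + 1 / m)) atTop (𝓝 1) := by
    simpa using ((tendsto_one_div_atTop_nhds_zero_nat).const_add 1).sqrt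
  have h := tendsto_centralBinom_mul_sqrt_div_four_pow.mul hratio
  rw [mul_one] at h
  refine h.congr' ?_
  filter_upwards [eventually_ne_atTop 0] with m hm
  have hm' : (m : ℝ) ≠ 0 := by exact_mod_cast hm
  have hprod : π * m * (1 + 1 / m) = π * (m + 1) := by field_simp
  have hcube : √(π * (m + 1) ^ 3) = (m + 1) * √(π * (m + 1)) := by
    rw [show π * (m + 1) ^ 3 = (m + 1) ^ 2 * (π * (m + 1)) by ring, sqrt_mul (by positivity),
      sqrt_sq (by positivity)]
  rw [div_mul_eq_mul_div, mul_assoc, ← sqrt_mul (by positivity), hprod, catC_succ,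
    cast_catalan_eq_centralBinom_div, Nat.add_sub_cancel, Nat.cast_succ, hcube]
  field_simp

/-- with `u n = 3^(n-1) * C n` and
`u_n^{#3} = Σ_{i=1}^{n-1} u i * u (n-i)`, one has
`u_n^{#3} ~ (1/9) * (3 * 12^(n-1)) / √(π n³)`. -/
theorem u3_asymptotic :
    Filter.Tendsto
      (fun n : ℕ =>
        (∑ i ∈ Finset.Icc 1 (n - 1),
            ((3 : ℝ) ^ (i - 1) * catC i) * ((3 : ℝ) ^ (n - i - 1) * catC (n - i)))
          / ((1 / 9) * (3 * (12 : ℝ) ^ (n - 1)) / Real.sqrt (Real.pi * (n : ℝ) ^ 3)))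
      Filter.atTop (nhds 1) := by
  rw [← tendsto_add_atTop_iff_nat 2]
  refine ((tendsto_add_atTop_iff_nat 2).2 tendsto_catC_mul_sqrt_div_four_pow).congr fun m => ?_
  rw [show m + 2 - 1 = m + 1 by omega, sum_Icc_three_pow_mul_catC,
    show (12 : ℝ) = 3 * 4 by norm_num, mul_pow]
  field_simp
  ring
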